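/- For integers k ≥ 1, n ≥ 1 and a multi-index L = (l₁,…,lₙ) with 1 ≤ l_i ≤ k for each i, one has (∏_{i=1}^{n} l_i!) · c^{(k)}_L = k! · ∑_{r₁=1}^{k} ⋯ ∑_{rₙ=1}^{k} (-1)^{∑_{i}(r_i + l_i)} · C(∏_{i=1}^{n} r_i, k) · ∏_{i=1}^{n} C(l_i, r_i), where C(·,·) denotes the binomial coefficient (with C(n,j) = 0 for j > n). -/
import Mathlib


open Nat

/-- Unsigned Stirling numbers of the first kind: the number of permutations of
`n` elements with exactly `p` cycles. -/
def stirling1 : ℕ → ℕ → ℕ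
  | 0, 0 => 1
  | 0, _ + 1 => 0
  | _ + 1, 0 => 0
  | n + 1, p + 1 => n * stirling1 n (p + 1) + stirling1 n p

/-- Stirling numbers of the second kind: the number of partitions of an
`n`-element set into `p` nonempty blocks (`stirling2 p l = 0` when `p < l`). -/
def stirling2 : ℕ → ℕ → ℕ
  | 0, 0 => 1
  | 0, _ + 1 => 0
  | _ + 1, 0 => 0
  | n + 1, p + 1 => (p + 1) * stirling2 n (p + 1) + stirling2 n p

/-- The multivariable coefficients
`c^(k)_L = ∑_{p=1}^k (-1)^(k-p) s(k,p) ∏_i S(p, l_i)`. -/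
def cMulti (k : ℕ) {n : ℕ} (L : Fin n → ℕ) : ℤ :=
  ∑ p ∈ Finset.Icc 1 k,
    (-1 : ℤ) ^ (k - p) * (stirling1 k p : ℤ) * ∏ i, (stirling2 p (L i) : ℤ)

lemma stirling1_zero (k : ℕ) : stirling1 (k + 1) 0 = 0 := rfl

lemma stirling1_of_lt : ∀ n p : ℕ, n < p → stirling1 n p = 0
  | 0, _ + 1, _ => rfl
  | n + 1, p + 1, h => by
    have h1 : n < p + 1 := by omega
    have h2 : n < p := by omega
    simp [stirling1, stirling1_of_lt n (p+1) h1, stirling1_of_lt n p h2]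

/-- Lemma A -/
lemma factorial_mul_stirling2 : ∀ p l : ℕ,
    ((l)! : ℤ) * stirling2 p l =
      ∑ r ∈ Finset.range (l + 1), (-1 : ℤ) ^ (l - r) * (l.choose r) * (r : ℤ) ^ p := by
  intro p
  induction p with
  | zero =>
    intro l
    match l with
    | 0 => simp [stirling2]
    | m + 1 =>
      have h0 : ((m+1)! : ℤ) * stirling2 0 (m+1) = 0 := by simp [stirling2]
      rw [h0]
      have : ∀ r ∈ Finset.range (m + 2),
          (-1 : ℤ) ^ (m + 1 - r) * ((m+1).choose r) * (r : ℤ) ^ 0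
          = (-1 : ℤ) ^ (m+1) * ((-1 : ℤ) ^ r * ((m+1).choose r)) := by
        intro r hr
        simp only [Finset.mem_range] at hr
        have hrm : r ≤ m + 1 := by omega
        have : (-1 : ℤ) ^ (m + 1 - r) * (-1 : ℤ) ^ r * (-1:ℤ)^r = (-1 : ℤ) ^ (m+1) * (-1:ℤ)^r := by
          rw [← pow_add, Nat.sub_add_cancel hrm]
        have h2 : (-1 : ℤ) ^ (m + 1 - r) = (-1 : ℤ) ^ (m+1) * (-1:ℤ)^r := by
          have hsq : ((-1:ℤ)^r) * ((-1:ℤ)^r) = 1 := by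
            rw [← pow_add, ← two_mul, pow_mul]; norm_num
          calc (-1 : ℤ) ^ (m + 1 - r) = (-1 : ℤ) ^ (m + 1 - r) * (((-1:ℤ)^r) * ((-1:ℤ)^r)) := by rw [hsq]; ring
            _ = ((-1 : ℤ) ^ (m + 1 - r) * (-1:ℤ)^r) * (-1:ℤ)^r := by ring
            _ = (-1:ℤ)^(m+1) * (-1:ℤ)^r := by rw [← pow_add, Nat.sub_add_cancel hrm]
        rw [h2]; ring
      rw [Finset.sum_congr rfl this, ← Finset.mul_sum,
        Int.alternating_sum_range_choose_of_ne (Nat.succ_ne_zero m), mul_zero]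
  | succ p ih =>
    intro l
    match l with
    | 0 => simp [stirling2]
    | m + 1 =>
      have hrec : ((m+1)! : ℤ) * stirling2 (p+1) (m+1)
          = (m+1) * (((m+1)! : ℤ) * stirling2 p (m+1)) + (m+1) * ((m ! : ℤ) * stirling2 p m) := by
        have : stirling2 (p+1) (m+1) = (m+1) * stirling2 p (m+1) + stirling2 p m := rfl
        rw [this]
        push_cast [Nat.factorial_succ]
        ring
      rw [hrec, ih (m+1), ih m]
      -- now pure sum manipulation
      have key : ∀ r ∈ Finset.range (m + 2),
          (-1 : ℤ) ^ (m + 1 - r) * ((m+1).choose r) * (r : ℤ) ^ (p+1)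
          = (m+1) * ((-1 : ℤ) ^ (m + 1 - r) * ((m+1).choose r) * (r : ℤ) ^ p)
            - (m+1) * ((-1 : ℤ) ^ (m + 1 - r) * ((m).choose r) * (r : ℤ) ^ p) := by
        intro r hr
        have hmul : (r : ℤ) * ((m+1).choose r) = (m+1) * (((m+1).choose r : ℤ) - (m.choose r : ℤ)) := by
          match r with
          | 0 => simp
          | s + 1 =>
            have h1 : (s+1) * ((m+1).choose (s+1)) = (m+1) * (m.choose s) := by
              rw [mul_comm (s+1), ← Nat.add_one_mul_choose_eq]
            have h2 : (m+1).choose (s+1) = m.choose s + m.choose (s+1) := Nat.choose_succ_succ m s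
            have := congrArg (fun x : ℕ => (x : ℤ)) h1
            push_cast [h2] at this ⊢
            linear_combination this
        calc (-1 : ℤ) ^ (m + 1 - r) * ((m+1).choose r) * (r : ℤ) ^ (p+1)
            = (-1 : ℤ) ^ (m + 1 - r) * ((r:ℤ) * ((m+1).choose r)) * (r : ℤ) ^ p := by ring
          _ = (-1 : ℤ) ^ (m + 1 - r) * ((m+1) * (((m+1).choose r : ℤ) - (m.choose r : ℤ))) * (r:ℤ)^p := by rw [hmul]
          _ = _ := by ring
      rw [Finset.sum_congr rfl key, Finset.sum_sub_distrib, ← Finset.mul_sum, ← Finset.mul_sum]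
      -- second sum equals -(sum over range (m+1) with sign m - r)
      have h2 : ∑ r ∈ Finset.range (m + 2), (-1 : ℤ) ^ (m + 1 - r) * ((m).choose r) * (r : ℤ) ^ p
          = - ∑ r ∈ Finset.range (m + 1), (-1 : ℤ) ^ (m - r) * ((m).choose r) * (r : ℤ) ^ p := by
        rw [Finset.sum_range_succ]
        have hz : (m).choose (m+1) = 0 := Nat.choose_eq_zero_of_lt (by omega)
        rw [hz]
        simp only [Nat.cast_zero, mul_zero, zero_mul, add_zero]
        rw [← Finset.sum_neg_distrib]
        apply Finset.sum_congr rfl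
        intro r hr
        simp only [Finset.mem_range] at hr
        have : m + 1 - r = (m - r) + 1 := by omega
        rw [this, pow_succ]
        ring
      rw [h2]
      ring

lemma descFactorial_cast_succ (x k : ℕ) :
    (x.descFactorial (k+1) : ℤ) = ((x:ℤ) - k) * x.descFactorial k := by
  rcases le_or_gt k x with h | h
  · rw [Nat.descFactorial_succ, Nat.cast_mul, Nat.cast_sub h]
  · rw [Nat.descFactorial_eq_zero_iff_lt.2 h, Nat.descFactorial_eq_zero_iff_lt.2 (by omega)]
    simp

lemma lemB (k : ℕ) : ∀ x : ℕ,
    ∑ p ∈ Finset.range (k+1), (-1:ℤ)^(k-p) * stirling1 k p * (x:ℤ)^p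
      = (x.descFactorial k : ℤ) := by
  induction k with
  | zero => intro x; simp [stirling1]
  | succ k ih =>
    intro x
    have hsplit : ∀ p ∈ Finset.range (k+1),
        (-1:ℤ)^(k+1-(p+1)) * stirling1 (k+1) (p+1) * (x:ℤ)^(p+1)
        = (-(k:ℤ)) * ((-1:ℤ)^(k-(p+1)) * stirling1 k (p+1) * (x:ℤ)^(p+1))
          + (x:ℤ) * ((-1:ℤ)^(k-p) * stirling1 k p * (x:ℤ)^p) := by
      intro p hp
      simp only [Finset.mem_range] at hp
      have hs : stirling1 (k+1) (p+1) = k * stirling1 k (p+1) + stirling1 k p := rfl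
      have hexp : k + 1 - (p+1) = k - p := by omega
      rw [hs, hexp]
      rcases Nat.lt_or_ge p k with h | h
      · have he : k - p = (k - (p+1)) + 1 := by omega
        push_cast
        rw [he, pow_succ]
        ring
      · have hpk : p = k := by omega
        subst hpk
        rw [stirling1_of_lt p (p+1) (by omega)]
        push_cast
        ring
    rw [Finset.sum_range_succ', Finset.sum_congr rfl hsplit, Finset.sum_add_distrib,
      ← Finset.mul_sum, ← Finset.mul_sum]
    have hSA : ∑ p ∈ Finset.range (k+1), (-1:ℤ)^(k-(p+1)) * stirling1 k (p+1) * (x:ℤ)^(p+1)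
        = (∑ p ∈ Finset.range (k+1), (-1:ℤ)^(k-p) * stirling1 k p * (x:ℤ)^p)
          - (-1:ℤ)^k * stirling1 k 0 := by
      rw [Finset.sum_range_succ _ k, stirling1_of_lt k (k+1) (by omega),
        Finset.sum_range_succ' (fun p => (-1:ℤ)^(k-p) * stirling1 k p * (x:ℤ)^p) k]
      simp
    have ht0 : (k:ℤ) * ((-1:ℤ)^k * stirling1 k 0) = 0 := by
      cases k with
      | zero => simp
      | succ m => simp [stirling1_zero]
    rw [hSA, ih, descFactorial_cast_succ]
    have h0 : (-1:ℤ)^(k+1-0) * stirling1 (k+1) 0 * (x:ℤ)^0 = 0 := by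
      simp [stirling1_zero]
    rw [h0]
    linear_combination ht0

lemma key2 (k : ℕ) (hk : 1 ≤ k) (x : ℕ) :
    ∑ p ∈ Finset.Icc 1 k, (-1:ℤ)^(k-p) * stirling1 k p * (x:ℤ)^p
      = (k ! : ℤ) * (x.choose k) := by
  have hsub : Finset.Icc 1 k ⊆ Finset.range (k+1) := by
    intro p hp; simp only [Finset.mem_Icc] at hp; simp only [Finset.mem_range]; omega
  rw [Finset.sum_subset hsub ?hz, lemB, Nat.descFactorial_eq_factorial_mul_choose]
  · push_cast; ring
  case hz =>
    intro p hp hnp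
    simp only [Finset.mem_range] at hp
    simp only [Finset.mem_Icc, not_and, not_le] at hnp
    rcases Nat.eq_zero_or_pos p with h0 | h1
    · subst h0
      obtain ⟨m, rfl⟩ : ∃ m, k = m + 1 := ⟨k - 1, by omega⟩
      simp [stirling1_zero]
    · exact absurd (hnp h1) (by omega)

/-- The alternating-sum formula for the multivariable coefficients. -/
theorem cMulti_alternating_formula (k n : ℕ) (hk : 1 ≤ k) (hn : 1 ≤ n)
    (L : Fin n → ℕ) (hL : ∀ i, 1 ≤ L i ∧ L i ≤ k) :
    (∏ i, ((L i)! : ℤ)) * cMulti k L =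
      (k ! : ℤ) *
        ∑ r ∈ Fintype.piFinset (fun _ : Fin n => Finset.Icc 1 k),
          (-1 : ℤ) ^ (∑ i, (r i + L i)) * ((∏ i, r i).choose k : ℤ) *
            ∏ i, ((L i).choose (r i) : ℤ) := by
  classical
  set G : (Fin n → ℕ) → ℤ := fun r =>
    (-1 : ℤ) ^ (∑ i, (r i + L i)) * ((∏ i, r i).choose k : ℤ) *
      ∏ i, ((L i).choose (r i) : ℤ) with hG
  set T : (Fin n → ℕ) → ℤ := fun r =>
    (∏ i, (-1:ℤ)^(L i - r i) * ((L i).choose (r i) : ℤ)) *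
      ((k ! : ℤ) * ((∏ i, r i).choose k : ℤ)) with hT
  -- Step 1
  have step1 : (∏ i, ((L i)! : ℤ)) * cMulti k L
      = ∑ r ∈ Fintype.piFinset (fun i => Finset.range (L i + 1)), T r := by
    unfold cMulti
    rw [Finset.mul_sum]
    have h1 : ∀ p ∈ Finset.Icc 1 k,
        (∏ i, ((L i)! : ℤ)) * ((-1:ℤ)^(k-p) * (stirling1 k p : ℤ) * ∏ i, (stirling2 p (L i) : ℤ))
        = ∑ r ∈ Fintype.piFinset (fun i => Finset.range (L i + 1)),
            (-1:ℤ)^(k-p) * (stirling1 k p : ℤ) *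
              ∏ i, ((-1:ℤ)^(L i - r i) * ((L i).choose (r i) : ℤ) * ((r i : ℤ))^p) := by
      intro p hp
      calc (∏ i, ((L i)! : ℤ)) * ((-1:ℤ)^(k-p) * (stirling1 k p : ℤ) * ∏ i, (stirling2 p (L i) : ℤ))
          = (-1:ℤ)^(k-p) * (stirling1 k p : ℤ) *
              ∏ i, (((L i)! : ℤ) * (stirling2 p (L i) : ℤ)) := by
            rw [Finset.prod_mul_distrib]; ring
        _ = (-1:ℤ)^(k-p) * (stirling1 k p : ℤ) *
              ∏ i, ∑ r ∈ Finset.range (L i + 1),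
                (-1:ℤ)^(L i - r) * ((L i).choose r : ℤ) * (r:ℤ)^p := by
            rw [Finset.prod_congr rfl (fun i _ => factorial_mul_stirling2 p (L i))]
        _ = (-1:ℤ)^(k-p) * (stirling1 k p : ℤ) *
              ∑ r ∈ Fintype.piFinset (fun i => Finset.range (L i + 1)),
                ∏ i, ((-1:ℤ)^(L i - r i) * ((L i).choose (r i) : ℤ) * ((r i : ℤ))^p) := by
            rw [Finset.prod_univ_sum]
        _ = _ := by rw [Finset.mul_sum]
    rw [Finset.sum_congr rfl h1, Finset.sum_comm]
    apply Finset.sum_congr rfl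
    intro r _
    have hprod : ∀ p : ℕ, (∏ i, ((-1:ℤ)^(L i - r i) * ((L i).choose (r i) : ℤ) * ((r i : ℤ))^p))
        = (∏ i, (-1:ℤ)^(L i - r i) * ((L i).choose (r i) : ℤ)) * (((∏ i, r i : ℕ) : ℤ))^p := by
      intro p
      rw [Finset.prod_mul_distrib, Finset.prod_pow, Nat.cast_prod]
    simp_rw [hprod]
    have hsum : ∑ p ∈ Finset.Icc 1 k,
        (-1:ℤ)^(k-p) * (stirling1 k p : ℤ) *
          ((∏ i, (-1:ℤ)^(L i - r i) * ((L i).choose (r i) : ℤ)) * (((∏ i, r i : ℕ) : ℤ))^p)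
        = (∏ i, (-1:ℤ)^(L i - r i) * ((L i).choose (r i) : ℤ)) *
            ∑ p ∈ Finset.Icc 1 k, (-1:ℤ)^(k-p) * (stirling1 k p : ℤ) * (((∏ i, r i : ℕ) : ℤ))^p := by
      rw [Finset.mul_sum]
      exact Finset.sum_congr rfl fun p _ => by ring
    rw [hsum, key2 k hk]
  -- Step 3 (pointwise)
  have step3 : ∀ r : Fin n → ℕ, T r = (k ! : ℤ) * G r := by
    intro r
    by_cases hle : ∀ i, r i ≤ L i
    · have hsign : (∏ i, (-1:ℤ)^(L i - r i)) = (-1:ℤ)^(∑ i, (r i + L i)) := by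
        rw [Finset.prod_pow_eq_pow_sum]
        have he : ∑ i, (r i + L i) = (∑ i, (L i - r i)) + 2 * ∑ i, r i := by
          rw [Finset.mul_sum, ← Finset.sum_add_distrib]
          exact Finset.sum_congr rfl fun i _ => by have := hle i; omega
        rw [he, pow_add, pow_mul]
        norm_num
      simp only [hT, hG]
      rw [Finset.prod_mul_distrib, hsign]
      ring
    · push_neg at hle
      obtain ⟨i, hi⟩ := hle
      have hc : ((L i).choose (r i) : ℤ) = 0 := by
        rw [Nat.choose_eq_zero_of_lt hi]; norm_num
      have hT0 : T r = 0 := by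
        simp only [hT]
        rw [Finset.prod_eq_zero (Finset.mem_univ i) (by rw [hc]; ring)]
        ring
      have hG0 : G r = 0 := by
        simp only [hG]
        have hz : (∏ j, ((L j).choose (r j) : ℤ)) = 0 :=
          Finset.prod_eq_zero (Finset.mem_univ i) hc
        rw [hz]
        ring
      rw [hT0, hG0]; ring
  -- Step 2: extend T-sum to big box
  have step2 : ∑ r ∈ Fintype.piFinset (fun i => Finset.range (L i + 1)), T r
      = ∑ r ∈ Fintype.piFinset (fun _ : Fin n => Finset.range (k + 1)), T r := by
    apply Finset.sum_subset
    · exact Fintype.piFinset_subset _ _ fun i => by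
        intro a ha
        simp only [Finset.mem_range] at ha ⊢
        have := (hL i).2
        omega
    · intro r _ hnr
      rw [Fintype.mem_piFinset] at hnr
      push_neg at hnr
      obtain ⟨i, hi⟩ := hnr
      simp only [Finset.mem_range, not_lt] at hi
      have hc : ((L i).choose (r i) : ℤ) = 0 := by
        rw [Nat.choose_eq_zero_of_lt (by omega)]; norm_num
      simp only [hT]
      rw [Finset.prod_eq_zero (Finset.mem_univ i) (by rw [hc]; ring)]
      ring
  -- Step 4: shrink G-sum from big box to Icc
  have step4 : ∑ r ∈ Fintype.piFinset (fun _ : Fin n => Finset.Icc 1 k), G r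
      = ∑ r ∈ Fintype.piFinset (fun _ : Fin n => Finset.range (k + 1)), G r := by
    apply Finset.sum_subset
    · exact Fintype.piFinset_subset _ _ fun i => by
        intro a ha
        simp only [Finset.mem_Icc] at ha
        simp only [Finset.mem_range]
        omega
    · intro r hr hnr
      rw [Fintype.mem_piFinset] at hr hnr
      push_neg at hnr
      obtain ⟨i, hi⟩ := hnr
      have hri : r i = 0 := by
        have := hr i
        simp only [Finset.mem_range] at this
        simp only [Finset.mem_Icc] at hi
        omega
      have hprod0 : ∏ j, r j = 0 := Finset.prod_eq_zero (Finset.mem_univ i) hri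
      simp only [hG]
      rw [hprod0, Nat.choose_eq_zero_of_lt (by omega)]
      push_cast
      ring
  calc (∏ i, ((L i)! : ℤ)) * cMulti k L
      = ∑ r ∈ Fintype.piFinset (fun _ : Fin n => Finset.range (k + 1)), T r := by
        rw [step1, step2]
    _ = (k ! : ℤ) * ∑ r ∈ Fintype.piFinset (fun _ : Fin n => Finset.range (k + 1)), G r := by
        rw [Finset.mul_sum]
        exact Finset.sum_congr rfl fun r _ => step3 r
    _ = _ := by rw [← step4]
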